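/- Under the fixpoint conditions of the provenance annotations, h(t) equals the minimal height over all valid proof trees for t, i.e., h(t) = min { height(τ) : τ is a valid proof tree for t }. -/
import Mathlib


inductive PTree (α : Type*) where
  | node : α → List (PTree α) → PTree α

namespace PTree
variable {α : Type*}

def root : PTree α → α
  | node t _ => t

mutual
def height : PTree α → ℕ
  | .node _ ts => heightList ts
def heightList : List (PTree α) → ℕ
  | [] => 0
  | τ :: ts => max (height τ + 1) (heightList ts)
end

end PTree

inductive IsProof {α : Type*} (EDB : Set α) (valid : α → List α → Prop) : PTree α → Prop where
  | leaf (t : α) (ht : t ∈ EDB) : IsProof EDB valid (PTree.node t [])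
  | node (t : α) (ts : List (PTree α)) (hne : ts ≠ [])
      (hv : valid t (ts.map PTree.root))
      (hc : ∀ τ ∈ ts, IsProof EDB valid τ) : IsProof EDB valid (PTree.node t ts)

def maxList (l : List ℕ) : ℕ := l.foldr max 0

lemma maxList_le {l : List ℕ} {n : ℕ} : maxList l ≤ n ↔ ∀ x ∈ l, x ≤ n := by
  induction l with
  | nil => simp [maxList]
  | cons a l ih => simp [maxList, List.foldr] at *; intro _; exact ih

lemma le_maxList {l : List ℕ} {x : ℕ} (hx : x ∈ l) : x ≤ maxList l := by
  induction l with
  | nil => simp at hx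
  | cons a l ih =>
    simp only [maxList, List.foldr]
    rcases List.mem_cons.1 hx with rfl | hx
    · exact le_max_left _ _
    · exact le_trans (ih hx) (le_max_right _ _)

lemma heightList_eq {α : Type*} (ts : List (PTree α)) :
    PTree.heightList ts = maxList (ts.map fun τ => τ.height + 1) := by
  induction ts with
  | nil => rfl
  | cons τ ts ih =>
    simp only [PTree.heightList, List.map, maxList, List.foldr] at *
    rw [ih]

lemma maxList_map_succ {l : List ℕ} (h : l ≠ []) :
    maxList (l.map (· + 1)) = maxList l + 1 := by
  induction l with
  | nil => simp at h
  | cons a l ih =>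
    cases l with
    | nil => simp [maxList]
    | cons b l =>
      simp only [List.map, maxList, List.foldr] at *
      rw [ih (by simp)]
      omega

lemma lower_bound {α : Type*} (EDB I : Set α) (valid : α → List α → Prop) (h : α → ℕ)
    (hEI : EDB ⊆ I)
    (hEDB0 : ∀ t ∈ EDB, h t = 0)
    (hupper : ∀ (t : α) (ts : List α), valid t ts → (∀ s ∈ ts, s ∈ I) →
        t ∈ I ∧ h t ≤ maxList (ts.map h) + 1) :
    ∀ τ : PTree α, IsProof EDB valid τ → τ.root ∈ I ∧ h τ.root ≤ τ.height := by
  intro τ hτ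
  induction hτ with
  | leaf t ht =>
      refine ⟨hEI ht, ?_⟩
      simp [PTree.root, PTree.height, PTree.heightList, hEDB0 t ht]
  | node t ts hne hv hc ih =>
      have hroots : ∀ s ∈ ts.map PTree.root, s ∈ I := by
        intro s hs
        rcases List.mem_map.1 hs with ⟨τ', hτ', rfl⟩
        exact (ih τ' hτ').1
      obtain ⟨htI, hle⟩ := hupper t (ts.map PTree.root) hv hroots
      refine ⟨htI, ?_⟩
      have : maxList ((ts.map PTree.root).map h) + 1 ≤ PTree.heightList ts := by
        rw [heightList_eq]
        cases ts with
        | nil => exact absurd rfl hne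
        | cons τ0 ts' =>
          have h1 : ∀ x ∈ ((τ0 :: ts').map PTree.root).map h, x + 1 ≤
              maxList (((τ0 :: ts').map fun τ => τ.height + 1)) := by
            intro x hx
            rw [List.map_map] at hx
            rcases List.mem_map.1 hx with ⟨τ', hτ', rfl⟩
            have := (ih τ' hτ').2
            calc h (PTree.root τ') + 1 ≤ τ'.height + 1 := by omega
              _ ≤ _ := le_maxList (List.mem_map.2 ⟨τ', hτ', rfl⟩)
          have h2 : maxList (((τ0 :: ts').map PTree.root).map h) + 1 ≤
              maxList (((τ0 :: ts').map fun τ => τ.height + 1)) := by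
            have := h1 (h (PTree.root τ0)) (by simp)
            have hmax : maxList (((τ0 :: ts').map PTree.root).map h) + 1 =
                maxList ((((τ0 :: ts').map PTree.root).map h).map (· + 1)) := by
              rw [maxList_map_succ (by simp)]
            rw [hmax, maxList_le]
            intro x hx
            rcases List.mem_map.1 hx with ⟨y, hy, rfl⟩
            exact h1 y hy
          exact h2
      simp only [PTree.root, PTree.height]
      omega

lemma exists_tree {α : Type*} (EDB I : Set α) (valid : α → List α → Prop) (h : α → ℕ)
    (hzero : ∀ t ∈ I, h t = 0 → t ∈ EDB)
    (hconf : ∀ t ∈ I, 0 < h t → ∃ ts : List α, ts ≠ [] ∧ valid t ts ∧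
        (∀ s ∈ ts, s ∈ I) ∧ h t = maxList (ts.map h) + 1) :
    ∀ n : ℕ, ∀ t ∈ I, h t = n →
      ∃ τ : PTree α, IsProof EDB valid τ ∧ τ.root = t ∧ τ.height = n := by
  intro n
  induction n using Nat.strong_induction_on with
  | _ n ih =>
  intro t htI hn
  rcases Nat.eq_zero_or_pos n with rfl | hpos
  · exact ⟨PTree.node t [], IsProof.leaf t (hzero t htI hn), rfl, rfl⟩
  · obtain ⟨ts, hne, hv, hI, heq⟩ := hconf t htI (hn ▸ hpos)
    -- build list of trees
    have hgood : ∀ s ∈ ts, s ∈ I ∧ h s < n := by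
      intro s hs
      have := le_maxList (l := ts.map h) (x := h s) (List.mem_map.2 ⟨s, hs, rfl⟩)
      exact ⟨hI s hs, by omega⟩
    have hpick : ∀ l : List α, (∀ s ∈ l, s ∈ I ∧ h s < n) →
        ∃ τs : List (PTree α), τs.map PTree.root = l ∧
        (∀ τ ∈ τs, IsProof EDB valid τ) ∧ τs.map PTree.height = l.map h := by
      intro l
      induction l with
      | nil => exact fun _ => ⟨[], rfl, by simp, rfl⟩
      | cons s ts' ihl =>
        intro hg
        obtain ⟨hsI, hlt⟩ := hg s (by simp)
        obtain ⟨τ, hτ, hr, hh⟩ := ih (h s) hlt s hsI rfl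
        obtain ⟨τs, h1, h2, h3⟩ := ihl (fun u hu => hg u (by simp [hu]))
        refine ⟨τ :: τs, by simp [hr, h1], ?_, by simp [hh, h3]⟩
        intro τ' hτ'
        rcases List.mem_cons.1 hτ' with rfl | hτ'
        · exact hτ
        · exact h2 _ hτ'
    obtain ⟨τs, hroots, hproofs, hheights⟩ := hpick ts hgood
    have hτsne : τs ≠ [] := by
      intro hc; rw [hc] at hroots; exact hne hroots.symm
    refine ⟨PTree.node t τs, IsProof.node t τs hτsne (hroots ▸ hv) hproofs, rfl, ?_⟩
    show PTree.heightList τs = n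
    rw [heightList_eq]
    have : (τs.map fun τ => τ.height + 1) = (ts.map h).map (· + 1) := by
      rw [← hheights, List.map_map]
      rfl
    rw [this, maxList_map_succ (by simpa using hne)]
    omega

/-- Under the fixpoint conditions, `h t` is the minimum of the heights of all
valid proof trees for `t` (it is attained and is a lower bound). -/
theorem annotation_eq_min_proof_height {α : Type*} (EDB I : Set α)
    (valid : α → List α → Prop) (h : α → ℕ)
    (hEI : EDB ⊆ I)
    (hEDB0 : ∀ t ∈ EDB, h t = 0)
    (hzero : ∀ t ∈ I, h t = 0 → t ∈ EDB)
    (hconf : ∀ t ∈ I, 0 < h t → ∃ ts : List α, ts ≠ [] ∧ valid t ts ∧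
        (∀ s ∈ ts, s ∈ I) ∧ h t = maxList (ts.map h) + 1)
    (hupper : ∀ (t : α) (ts : List α), valid t ts → (∀ s ∈ ts, s ∈ I) →
        t ∈ I ∧ h t ≤ maxList (ts.map h) + 1) :
    ∀ t ∈ I, IsLeast {n : ℕ | ∃ τ : PTree α,
        IsProof EDB valid τ ∧ τ.root = t ∧ τ.height = n} (h t) := by
  intro t htI
  constructor
  · exact exists_tree EDB I valid h hzero hconf (h t) t htI rfl
  · rintro n ⟨τ, hτ, hr, rfl⟩
    have := (lower_bound EDB I valid h hEI hEDB0 hupper τ hτ).2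
    rw [hr] at this
    exact this
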